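/- Let g be the 6-dimensional real nilpotent Lie algebra with nonzero brackets [e₁,e₂] = e₄, [e₁,e₄] = e₅, [e₂,e₄] = e₆. The real vector space of ad-invariant symmetric bilinear forms on g has dimension exactly 7; explicitly, a symmetric bilinear form β is ad-invariant if and only if β(eᵢ, eⱼ) = 0 for all pairs (i,j) with i ≤ j except possibly the six pairs with i,j ∈ {1,2,3} and the components β(e₁,e₆) = -β(e₂,e₅) = β(e₄,e₄), which constitute one additional free parameter. -/

import Mathlib

/-
Ad-invariance is linear in each argument, so it only has to be checked on basis triples
`(eᵢ, eⱼ, eₖ)`, and only `e₁, e₂, e₄` act nontrivially. For a symmetric `β`, each such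
triple either vanishes identically or pins down one Gram entry: everything outside the
`{e₁, e₂, e₃}` block is zero except `β(e₁, e₆) = -β(e₂, e₅) = β(e₄, e₄)`. Conversely every
symmetric form with such a Gram matrix is invariant, so the invariant forms are the image
of an injective linear map from `ℝ⁷`.
-/

noncomputable def adInvSymmForms (g : Type*) [LieRing g] [LieAlgebra ℝ g] :
    Submodule ℝ (g →ₗ[ℝ] g →ₗ[ℝ] ℝ) where
  carrier := {β | (∀ x y : g, β x y = β y x) ∧ ∀ x y z : g, β ⁅x, y⁆ z + β y ⁅x, z⁆ = 0}
  add_mem' := by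
    rintro β γ ⟨hs, hi⟩ ⟨hs', hi'⟩
    refine ⟨fun x y => ?_, fun x y z => ?_⟩
    · simp only [LinearMap.add_apply]; rw [hs x y, hs' x y]
    · simp only [LinearMap.add_apply]
      have h1 := hi x y z; have h2 := hi' x y z; linarith
  zero_mem' := by
    refine ⟨fun x y => ?_, fun x y z => ?_⟩ <;> simp
  smul_mem' := by
    rintro c β ⟨hs, hi⟩
    refine ⟨fun x y => ?_, fun x y z => ?_⟩
    · simp only [LinearMap.smul_apply, smul_eq_mul]; rw [hs x y]
    · simp only [LinearMap.smul_apply, smul_eq_mul]; linear_combination c * hi x y z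

open LinearMap Module

section ParamForm

variable {R M : Type*} [CommRing R] [AddCommGroup M] [Module R M]

def paramMatrix : (Fin 7 → R) →ₗ[R] Matrix (Fin 6) (Fin 6) R where
  toFun v := !![v 0, v 1, v 2, 0, 0, v 6;
                v 1, v 3, v 4, 0, -v 6, 0;
                v 2, v 4, v 5, 0, 0, 0;
                0, 0, 0, v 6, 0, 0;
                0, -v 6, 0, 0, 0, 0;
                v 6, 0, 0, 0, 0, 0]
  map_add' v w := by ext i j; fin_cases i <;> fin_cases j <;> simp [add_comm]
  map_smul' c v := by ext i j; fin_cases i <;> fin_cases j <;> simp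

theorem paramMatrix_isSymm (v : Fin 7 → R) : (paramMatrix v).IsSymm :=
  Matrix.IsSymm.ext fun i j => by fin_cases i <;> fin_cases j <;> rfl

theorem paramMatrix_injective : Function.Injective (paramMatrix : (Fin 7 → R) → _) := by
  intro v w h
  ext k
  fin_cases k
  exacts [congr_fun₂ h 0 0, congr_fun₂ h 0 1, congr_fun₂ h 0 2, congr_fun₂ h 1 1,
    congr_fun₂ h 1 2, congr_fun₂ h 2 2, congr_fun₂ h 3 3]

variable (e : Basis (Fin 6) R M)

noncomputable def paramForm : (Fin 7 → R) →ₗ[R] M →ₗ[R] M →ₗ[R] R :=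
  (Matrix.toLinearMap₂ e e).toLinearMap ∘ₗ paramMatrix

theorem paramForm_apply_basis (v : Fin 7 → R) (i j : Fin 6) :
    paramForm e v (e i) (e j) = paramMatrix v i j :=
  Matrix.toLinearMap₂_apply_basis e e _ i j

theorem paramForm_comm (v : Fin 7 → R) (x y : M) : paramForm e v x y = paramForm e v y x := by
  have : (paramForm e v).flip = paramForm e v := ext_basis e e fun i j => by
    rw [flip_apply, paramForm_apply_basis, paramForm_apply_basis, (paramMatrix_isSymm v).apply]
  exact congr_fun₂ this y x

theorem paramForm_injective : Function.Injective (paramForm e) :=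
  (Matrix.toLinearMap₂ e e).injective.comp paramMatrix_injective

theorem eq_paramForm {β : M →ₗ[R] M →ₗ[R] R} (hsym : ∀ x y, β x y = β y x)
    (hzero : ∀ i j : Fin 6, i ≤ j → ¬(i ≤ 2 ∧ j ≤ 2) →
      (i, j) ≠ (0, 5) → (i, j) ≠ (1, 4) → (i, j) ≠ (3, 3) → β (e i) (e j) = 0)
    (h05 : β (e 0) (e 5) = β (e 3) (e 3)) (h14 : β (e 1) (e 4) = -β (e 3) (e 3)) :
    β = paramForm e ![β (e 0) (e 0), β (e 0) (e 1), β (e 0) (e 2), β (e 1) (e 1),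
      β (e 1) (e 2), β (e 2) (e 2), β (e 3) (e 3)] := by
  refine ext_basis e e fun i j => ?_
  rw [paramForm_apply_basis]
  fin_cases i <;> fin_cases j <;> first
    | (simp [paramMatrix, hzero, h05, h14]; done)
    | (rw [hsym]; simp [paramMatrix, hzero, h05, h14])

end ParamForm

section Invariance

variable {R L : Type*} [CommRing R] [LieRing L] [LieAlgebra R L]

theorem lie_bilinForm_apply (β : L →ₗ[R] L →ₗ[R] R) (x y z : L) :
    ⁅x, β⁆ y z = -(β ⁅x, y⁆ z + β y ⁅x, z⁆) := by
  rw [LieHom.lie_apply, LinearMap.sub_apply, Dual.lie_apply]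
  ring

-- Invariance says that `β` is killed by the action of `L`, and `x ↦ ⁅x, β⁆` is linear.
theorem lie_invariant_iff_basis {ι : Type*} (e : Basis ι R L) (β : L →ₗ[R] L →ₗ[R] R) :
    (∀ x y z : L, β ⁅x, y⁆ z + β y ⁅x, z⁆ = 0) ↔
      ∀ i j k, β ⁅e i, e j⁆ (e k) + β (e j) ⁅e i, e k⁆ = 0 := by
  refine ⟨fun h i j k => h _ _ _, fun h x y z => ?_⟩
  have hact : (LieModule.toEnd R L (L →ₗ[R] L →ₗ[R] R) : L →ₗ[R] End R _).flip β = 0 :=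
    e.ext fun i => ext_basis e e fun j k => by
      simp only [flip_apply, LieHom.coe_toLinearMap, LieModule.toEnd_apply_apply,
        lie_bilinForm_apply, h, neg_zero, LinearMap.zero_apply]
  have := congr($hact x y z)
  simp only [flip_apply, LieHom.coe_toLinearMap, LieModule.toEnd_apply_apply,
    lie_bilinForm_apply, LinearMap.zero_apply] at this
  exact neg_eq_zero.mp this

end Invariance

section Lie

variable {R L : Type*} [CommRing R] [LieRing L] [LieAlgebra R L] (e : Basis (Fin 6) R L)

-- Indices are shifted down by one from the paper's `e₁, …, e₆`.
noncomputable def basisBracket : Fin 6 → Fin 6 → L :=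
  ![![0, e 3, 0, e 4, 0, 0],
    ![-e 3, 0, 0, e 5, 0, 0],
    0,
    ![-e 4, -e 5, 0, 0, 0, 0],
    0,
    0]

theorem lie_basis_eq_basisBracket
    (h12 : ⁅e 0, e 1⁆ = e 3) (h14 : ⁅e 0, e 3⁆ = e 4) (h24 : ⁅e 1, e 3⁆ = e 5)
    (h0 : ∀ i j : Fin 6,
      (i, j) ∉ ({(0,1), (1,0), (0,3), (3,0), (1,3), (3,1)} : Set (Fin 6 × Fin 6)) →
      ⁅e i, e j⁆ = 0) (i j : Fin 6) :
    ⁅e i, e j⁆ = basisBracket e i j := by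
  fin_cases i <;> fin_cases j <;> first
    | exact h0 _ _ (by decide)
    | (simp [basisBracket, h12, h14, h24]; done)
    | (rw [← lie_skew]; simp [basisBracket, h12, h14, h24])

variable {e}

theorem paramForm_lie_invariant (hlie : ∀ i j, ⁅e i, e j⁆ = basisBracket e i j)
    (v : Fin 7 → R) (x y z : L) :
    paramForm e v ⁅x, y⁆ z + paramForm e v y ⁅x, z⁆ = 0 := by
  revert x y z
  rw [lie_invariant_iff_basis e]
  intro i j k
  rw [hlie, hlie]
  fin_cases i <;> fin_cases j <;> fin_cases k <;>
    simp [basisBracket, paramForm_apply_basis, paramMatrix]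

theorem coeffs_of_lie_invariant (hlie : ∀ i j, ⁅e i, e j⁆ = basisBracket e i j)
    {β : L →ₗ[R] L →ₗ[R] R} (hsym : ∀ x y, β x y = β y x)
    (hinv : ∀ x y z : L, β ⁅x, y⁆ z + β y ⁅x, z⁆ = 0) :
    (∀ i j : Fin 6, i ≤ j → ¬(i ≤ 2 ∧ j ≤ 2) →
        (i, j) ≠ (0, 5) → (i, j) ≠ (1, 4) → (i, j) ≠ (3, 3) → β (e i) (e j) = 0) ∧
      β (e 0) (e 5) = β (e 3) (e 3) ∧ β (e 1) (e 4) = -β (e 3) (e 3) := by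
  have H (i j k : Fin 6) : β (basisBracket e i j) (e k) + β (e j) (basisBracket e i k) = 0 := by
    simpa only [hlie] using hinv (e i) (e j) (e k)
  refine ⟨fun i j hij hlow h05 h14 h33 => ?_, ?_, ?_⟩
  · fin_cases i <;> fin_cases j <;>
      try (exfalso; revert hij hlow h05 h14 h33; decide)
    -- each remaining entry is read off from invariance at a single basis triple
    · simpa [basisBracket, hsym] using H 0 1 0
    · simpa [basisBracket, hsym] using H 0 3 0
    · simpa [basisBracket, hsym] using H 1 0 1
    · simpa [basisBracket, hsym] using H 1 3 1
    · simpa [basisBracket, hsym] using H 0 1 2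
    · simpa [basisBracket, hsym] using H 0 3 2
    · simpa [basisBracket, hsym] using H 1 3 2
    · simpa [basisBracket, hsym] using H 0 1 4
    · simpa [basisBracket, hsym] using H 0 1 5
    · simpa [basisBracket, hsym] using H 0 3 4
    · simpa [basisBracket, hsym] using H 0 3 5
    · simpa [basisBracket, hsym] using H 1 3 5
  · have h := H 1 3 0
    simp only [basisBracket, Matrix.cons_val', Matrix.cons_val, Pi.zero_apply,
      Matrix.cons_val_fin_one, Matrix.cons_val_one, Matrix.cons_val_zero, map_neg] at h
    linear_combination h + hsym (e 0) (e 5)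
  · have h := H 0 1 3
    simp only [basisBracket, Matrix.cons_val', Matrix.cons_val, Pi.zero_apply,
      Matrix.cons_val_fin_one, Matrix.cons_val_one, Matrix.cons_val_zero] at h
    linear_combination h

end Lie

theorem adInvSymmForms_eq_range_paramForm {g : Type*} [LieRing g] [LieAlgebra ℝ g]
    {e : Basis (Fin 6) ℝ g} (hlie : ∀ i j, ⁅e i, e j⁆ = basisBracket e i j) :
    adInvSymmForms g = LinearMap.range (paramForm e) := by
  ext β
  constructor
  · rintro ⟨hsym, hinv⟩
    obtain ⟨hzero, h05, h14⟩ := coeffs_of_lie_invariant hlie hsym hinv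
    exact ⟨_, (eq_paramForm e hsym hzero h05 h14).symm⟩
  · rintro ⟨v, rfl⟩
    exact ⟨paramForm_comm e v, paramForm_lie_invariant hlie v⟩

/-- For the 6-dimensional nilpotent Lie algebra with nonzero brackets
`[e₁,e₂] = e₄`, `[e₁,e₄] = e₅`, `[e₂,e₄] = e₆` (0-indexed below), the space of
ad-invariant symmetric bilinear forms has dimension exactly `7`; explicitly, a
symmetric bilinear form `β` is ad-invariant iff `β(eᵢ,eⱼ) = 0` for all `i ≤ j` except
possibly the six pairs with `i,j ∈ {1,2,3}` and the components
`β(e₁,e₆) = -β(e₂,e₅) = β(e₄,e₄)`, which constitute one additional free parameter. -/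
theorem stmt_14 {g : Type*} [LieRing g] [LieAlgebra ℝ g]
    (e : Module.Basis (Fin 6) ℝ g)
    (h12 : ⁅e 0, e 1⁆ = e 3) (h14 : ⁅e 0, e 3⁆ = e 4) (h24 : ⁅e 1, e 3⁆ = e 5)
    (h0 : ∀ i j : Fin 6,
      (i, j) ∉ ({(0,1), (1,0), (0,3), (3,0), (1,3), (3,1)} : Set (Fin 6 × Fin 6)) →
      ⁅e i, e j⁆ = 0) :
    Module.finrank ℝ (adInvSymmForms g) = 7 ∧
    (∀ β : g →ₗ[ℝ] g →ₗ[ℝ] ℝ, (∀ x y : g, β x y = β y x) →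
      ((∀ x y z : g, β ⁅x, y⁆ z + β y ⁅x, z⁆ = 0) ↔
        ((∀ i j : Fin 6, i ≤ j → ¬(i ≤ 2 ∧ j ≤ 2) →
            (i, j) ≠ (0, 5) → (i, j) ≠ (1, 4) → (i, j) ≠ (3, 3) →
            β (e i) (e j) = 0) ∧
          β (e 0) (e 5) = β (e 3) (e 3) ∧
          β (e 1) (e 4) = - β (e 3) (e 3)))) := by
  have hlie := lie_basis_eq_basisBracket e h12 h14 h24 h0
  refine ⟨?_, fun β hsym => ⟨coeffs_of_lie_invariant hlie hsym, fun ⟨hzero, hb05, hb14⟩ => ?_⟩⟩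
  · rw [adInvSymmForms_eq_range_paramForm hlie, finrank_range_of_inj (paramForm_injective e),
      finrank_fin_fun]
  · rw [eq_paramForm e hsym hzero hb05 hb14]
    exact paramForm_lie_invariant hlie _
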